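/- arXiv:math/0607326 — 3 statements merged into one kernel-verified Lean document; each statement's English description precedes it below -/
import Mathlib

section
/- Let G be a finite connected simple graph, and consider the map d : ℤ^E → ℤ^V sending each edge to the sum (not difference) of its two endpoints. If G is bipartite, then the cokernel of d is isomorphic to ℤ; if G contains a cycle of odd length, then the cokernel of d is isomorphic to ℤ/2. -/
/-- The sum of the endpoints of an (unordered) edge, as an element of `ℤ^V`. -/
def endpointSum {V : Type*} [DecidableEq V] (e : Sym2 V) : V → ℤ :=
  Sym2.lift ⟨fun a b => Pi.single a (1 : ℤ) + Pi.single b 1, fun a b => add_comm _ _⟩ e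

/-- The unsigned incidence map `d : ℤ^E → ℤ^V`, sending each edge to the sum of its
endpoints. -/
noncomputable def incMap {V : Type*} [Fintype V] [DecidableEq V] (G : SimpleGraph V)
    [DecidableRel G.Adj] : (G.edgeSet → ℤ) →ₗ[ℤ] (V → ℤ) :=
  ∑ e : G.edgeSet,
    (LinearMap.proj (R := ℤ) (φ := fun _ : G.edgeSet => ℤ) e).smulRight
      (endpointSum (e : Sym2 V))


section Aux
variable {V : Type*} [Fintype V] [DecidableEq V] (G : SimpleGraph V) [DecidableRel G.Adj]

lemma endpointSum_mk (a b : V) :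
    endpointSum (s(a,b)) = Pi.single a (1:ℤ) + Pi.single b 1 := rfl

lemma incMap_apply (x : G.edgeSet → ℤ) :
    incMap G x = ∑ e : G.edgeSet, x e • endpointSum (e : Sym2 V) := by
  simp [incMap]

lemma endpointSum_mem (e : G.edgeSet) :
    endpointSum (e : Sym2 V) ∈ LinearMap.range (incMap G) := by
  refine ⟨Pi.single e 1, ?_⟩
  simp [incMap_apply, Pi.single_apply, ite_smul]

lemma walk_mem {u v : V} (w : G.Walk u v) :
    Pi.single u (1:ℤ) - ((-1:ℤ)^w.length) • Pi.single v 1 ∈ LinearMap.range (incMap G) := by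
  induction w with
  | nil => simp
  | @cons a b c h p ih =>
    have he : endpointSum (s(a, b)) ∈ LinearMap.range (incMap G) :=
      endpointSum_mem G ⟨s(a,b), h⟩
    have := Submodule.sub_mem _ he ih
    convert this using 1
    rw [endpointSum_mk, SimpleGraph.Walk.length_cons, pow_succ]
    module

end Aux

section Bip
variable {V : Type*} [Fintype V] [DecidableEq V] {G : SimpleGraph V} [DecidableRel G.Adj]
variable (C : G.Coloring (Fin 2))

noncomputable def eps (v : V) : ℤ := if C v = 0 then 1 else -1

lemma eps_sq (v : V) : eps C v * eps C v = 1 := by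
  unfold eps; split <;> norm_num

lemma eps_adj {u v : V} (h : G.Adj u v) : eps C u = - eps C v := by
  have hne := C.valid h
  unfold eps
  have h2 : ∀ a : Fin 2, a = 0 ∨ a = 1 := by decide
  rcases h2 (C u) with hu | hu <;> rcases h2 (C v) with hv | hv <;>
    simp_all <;> omega

lemma eps_walk {u v : V} (w : G.Walk u v) : ((-1:ℤ))^w.length = eps C u * eps C v := by
  induction w with
  | nil => simp [eps_sq]
  | @cons a b c h p ih =>
    rw [SimpleGraph.Walk.length_cons, pow_succ, mul_comm, ih, eps_adj C h]
    ring

noncomputable def phiC : (V → ℤ) →ₗ[ℤ] ℤ :=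
  ∑ v : V, (eps C v) • (LinearMap.proj v : (V → ℤ) →ₗ[ℤ] ℤ)

lemma phiC_apply (x : V → ℤ) : phiC C x = ∑ v : V, eps C v * x v := by
  simp [phiC]

lemma phiC_single (v : V) : phiC C (Pi.single v 1) = eps C v := by
  simp [phiC_apply, Pi.single_apply, mul_ite]

lemma range_eq_ker (hconn : G.Connected) :
    LinearMap.range (incMap G) = LinearMap.ker (phiC C) := by
  apply le_antisymm
  · rintro _ ⟨x, rfl⟩
    rw [LinearMap.mem_ker, incMap_apply, map_sum]
    apply Finset.sum_eq_zero
    rintro ⟨e, he⟩ -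
    induction e with
    | h a b =>
      rw [SimpleGraph.mem_edgeSet] at he
      rw [map_smul, endpointSum_mk, map_add, phiC_single, phiC_single, eps_adj C he]
      simp
  · intro x hx
    rw [LinearMap.mem_ker, phiC_apply] at hx
    obtain ⟨u0⟩ := hconn.nonempty
    have key : ∀ v : V, Pi.single v (1:ℤ) - (eps C v * eps C u0) • Pi.single u0 1 ∈
        LinearMap.range (incMap G) := by
      intro v
      have := walk_mem G (hconn v u0).some
      rwa [eps_walk C] at this
    have hx' : x = ∑ v : V, x v • (Pi.single v (1:ℤ) - (eps C v * eps C u0) • Pi.single u0 1)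
        + ((∑ v : V, eps C v * x v) * eps C u0) • Pi.single u0 1 := by
      rw [Finset.sum_mul, Finset.sum_smul]
      rw [← Finset.sum_add_distrib]
      have : ∀ v : V, x v • (Pi.single v (1:ℤ) - (eps C v * eps C u0) • Pi.single u0 1)
          + (eps C v * x v * eps C u0) • Pi.single u0 1 = (x v • Pi.single v 1 : V → ℤ) := by
        intro v; module
      simp_rw [this]
      ext w
      simp [Finset.sum_apply, Pi.single_apply, mul_ite]
    rw [hx']
    apply Submodule.add_mem
    · exact Submodule.sum_mem _ fun v _ => Submodule.smul_mem _ _ (key v)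
    · rw [hx, zero_mul, zero_smul]; exact Submodule.zero_mem _

lemma phiC_surj (u0 : V) : Function.Surjective (phiC C) := by
  intro c
  refine ⟨(c * eps C u0) • Pi.single u0 1, ?_⟩
  rw [map_smul, phiC_single, smul_eq_mul, mul_assoc, eps_sq, mul_one]

end Bip

section Odd
variable {V : Type*} [Fintype V] [DecidableEq V] {G : SimpleGraph V} [DecidableRel G.Adj]

noncomputable def psiM : (V → ℤ) →ₗ[ℤ] ZMod 2 :=
  ∑ v : V, ((Int.castRingHom (ZMod 2)).toIntLinearMap).comp
    (LinearMap.proj v : (V → ℤ) →ₗ[ℤ] ℤ)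

lemma psiM_apply (x : V → ℤ) : psiM x = ∑ v : V, ((x v : ZMod 2)) := by
  simp [psiM]

lemma psiM_single (v : V) : psiM (Pi.single v (1:ℤ)) = 1 := by
  simp [psiM_apply, Pi.single_apply, apply_ite]

lemma range_eq_ker_psi (hconn : G.Connected) {u : V} (w : G.Walk u u)
    (hodd : Odd w.length) :
    LinearMap.range (incMap G) = LinearMap.ker psiM := by
  have h2u : (2:ℤ) • Pi.single u 1 ∈ LinearMap.range (incMap G) := by
    have := walk_mem G w
    rwa [Odd.neg_one_pow hodd, neg_one_smul, sub_neg_eq_add, ← two_smul ℤ] at this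
  have key : ∀ v : V, Pi.single v (1:ℤ) - Pi.single u 1 ∈ LinearMap.range (incMap G) := by
    intro v
    have hw := walk_mem G (hconn v u).some
    rcases Nat.even_or_odd ((hconn v u).some.length) with he | ho
    · rwa [Even.neg_one_pow he, one_smul] at hw
    · rw [Odd.neg_one_pow ho, neg_one_smul, sub_neg_eq_add] at hw
      have := Submodule.sub_mem _ hw h2u
      convert this using 1
      module
  apply le_antisymm
  · rintro _ ⟨x, rfl⟩
    rw [LinearMap.mem_ker, incMap_apply, map_sum]
    apply Finset.sum_eq_zero
    rintro ⟨e, he⟩ -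
    induction e with
    | h a b =>
      rw [map_smul, endpointSum_mk, map_add, psiM_single, psiM_single]
      rw [← two_smul (ZMod 2), smul_eq_mul, show ((2:ZMod 2)) = 0 from rfl, zero_mul, smul_zero]
  · intro x hx
    rw [LinearMap.mem_ker, psiM_apply] at hx
    rw [← Int.cast_sum, ZMod.intCast_zmod_eq_zero_iff_dvd] at hx
    obtain ⟨k, hk⟩ := hx
    have hx' : x = ∑ v : V, x v • (Pi.single v (1:ℤ) - Pi.single u 1)
        + k • ((2:ℤ) • Pi.single u 1) := by
      have : k • ((2:ℤ) • Pi.single u 1) = ((∑ v : V, x v) • Pi.single u 1 : V → ℤ) := by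
        rw [hk]; module
      rw [this, Finset.sum_smul, ← Finset.sum_add_distrib]
      have h1 : ∀ v : V, x v • (Pi.single v (1:ℤ) - Pi.single u 1)
          + x v • Pi.single u 1 = (x v • Pi.single v 1 : V → ℤ) := by
        intro v; module
      simp_rw [h1]
      ext y
      simp [Finset.sum_apply, Pi.single_apply, mul_ite]
    rw [hx']
    exact Submodule.add_mem _
      (Submodule.sum_mem _ fun v _ => Submodule.smul_mem _ _ (key v))
      (Submodule.smul_mem _ _ h2u)

lemma psiM_surj (u0 : V) : Function.Surjective (psiM (V := V)) := by
  intro c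
  obtain ⟨n, hn⟩ := ZMod.intCast_surjective (n := 2) c
  exact ⟨n • Pi.single u0 1, by rw [map_smul, psiM_single, zsmul_one]; exact hn⟩

end Odd

/-- For a finite connected simple graph, the cokernel of the unsigned incidence map is `ℤ`
if `G` is bipartite, and `ℤ/2` if `G` has an odd cycle. -/
theorem stmt3 {V : Type*} [Fintype V] [DecidableEq V] (G : SimpleGraph V)
    [DecidableRel G.Adj] (hconn : G.Connected) :
    (G.Colorable 2 →
      Nonempty (((V → ℤ) ⧸ LinearMap.range (incMap G)) ≃ₗ[ℤ] ℤ)) ∧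
    ((∃ (u : V) (w : G.Walk u u), w.IsCycle ∧ Odd w.length) →
      Nonempty (((V → ℤ) ⧸ LinearMap.range (incMap G)) ≃ₗ[ℤ] ZMod 2)) := by
  obtain ⟨u0⟩ := hconn.nonempty
  constructor
  · intro hcol
    obtain ⟨C⟩ := hcol
    exact ⟨(Submodule.quotEquivOfEq _ _ (range_eq_ker C hconn)).trans
      ((phiC C).quotKerEquivOfSurjective (phiC_surj C u0))⟩
  · rintro ⟨u, w, -, hodd⟩
    exact ⟨(Submodule.quotEquivOfEq _ _ (range_eq_ker_psi hconn w hodd)).trans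
      (psiM.quotKerEquivOfSurjective (psiM_surj u0))⟩
end

section
/- Let G be a finite connected simple graph that contains an odd cycle, and let d : ℤ^E → ℤ^V send each edge to the sum of its endpoints. Then the kernel of d is a free abelian group of rank |E| - v, where v is the number of vertices. -/
/-!
Walking along a path from `a` to `b` and alternately adding and subtracting the edges
gives `d x = a ± b`, the sign being `(-1)^length`. An odd closed walk at `u` therefore
gives `2u ∈ im d`, and connectivity transports this to `2t ∈ im d` for every vertex `t`.
So `im d` has full rank `v` in `ℤ^V`, and rank–nullity gives `rank ker d = |E| - v`;
freeness holds because `ker d` is a submodule of the free module `ℤ^E` over a PID.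
-/

theorem Submodule.finrank_eq_of_smul_mem {R M : Type*} [CommRing R] [IsDomain R]
    [IsNoetherianRing R] [AddCommGroup M] [Module R M] [Module.Finite R M]
    [Module.IsTorsionFree R M] (S : Submodule R M) {c : R} (hc : c ≠ 0) (hS : ∀ x, c • x ∈ S) :
    Module.finrank R S = Module.finrank R M := by
  let f : M →ₗ[R] S := (c • LinearMap.id).codRestrict S hS
  have hf : Function.Injective f := fun x y hxy =>
    smul_right_injective M hc (congrArg Subtype.val hxy)
  exact le_antisymm S.finrank_le (LinearMap.finrank_le_finrank_of_injective hf)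

section IncMap

variable {V : Type*} [Fintype V] [DecidableEq V] {G : SimpleGraph V} [DecidableRel G.Adj]

theorem incMap_single (e : G.edgeSet) :
    incMap G (Pi.single e 1) = endpointSum (e : Sym2 V) := by
  simp [incMap, Pi.single_apply]

theorem SimpleGraph.Walk.single_sub_neg_one_pow_smul_single_mem_range {a b : V}
    (w : G.Walk a b) :
    Pi.single a 1 - ((-1 : ℤ) ^ w.length) • Pi.single b 1 ∈ LinearMap.range (incMap G) := by
  induction w with
  | nil => simp
  | @cons a c b h p ih =>
    have hedge : Pi.single a 1 + Pi.single c 1 ∈ LinearMap.range (incMap G) :=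
      ⟨_, incMap_single ⟨s(a, c), h⟩⟩
    convert sub_mem hedge ih using 1
    rw [SimpleGraph.Walk.length_cons, pow_succ]
    module

theorem two_smul_single_mem_range_incMap (hconn : G.Preconnected)
    {u : V} {w : G.Walk u u} (hw : Odd w.length) (t : V) :
    (2 : ℤ) • Pi.single t 1 ∈ LinearMap.range (incMap G) := by
  have hu : (2 : ℤ) • Pi.single u 1 ∈ LinearMap.range (incMap G) := by
    simpa [hw.neg_one_pow, two_smul] using w.single_sub_neg_one_pow_smul_single_mem_range
  obtain ⟨p⟩ := hconn t u
  have hp := p.single_sub_neg_one_pow_smul_single_mem_range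
  convert add_mem ((LinearMap.range (incMap G)).smul_mem 2 hp)
    ((LinearMap.range (incMap G)).smul_mem ((-1) ^ p.length) hu) using 1
  module

theorem finrank_range_incMap (hconn : G.Preconnected)
    {u : V} {w : G.Walk u u} (hw : Odd w.length) :
    Module.finrank ℤ (LinearMap.range (incMap G)) = Fintype.card V := by
  rw [(LinearMap.range (incMap G)).finrank_eq_of_smul_mem two_ne_zero, Module.finrank_pi]
  intro x
  rw [← Finset.univ_sum_single x, Finset.smul_sum]
  refine Submodule.sum_mem _ fun t _ => ?_
  rw [← mul_one (x t), ← smul_eq_mul, Pi.single_smul', smul_comm]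
  exact Submodule.smul_mem _ _ (two_smul_single_mem_range_incMap hconn hw t)

end IncMap

/-- For a finite connected simple graph containing an odd cycle, the kernel of the unsigned
incidence map `d : ℤ^E → ℤ^V` is a free abelian group of rank `|E| - v`. -/
theorem stmt4 {V : Type*} [Fintype V] [DecidableEq V] (G : SimpleGraph V)
    [DecidableRel G.Adj] (hconn : G.Connected)
    (hodd : ∃ (u : V) (w : G.Walk u u), w.IsCycle ∧ Odd w.length) :
    Module.Free ℤ ↥(LinearMap.ker (incMap G)) ∧
    (Module.finrank ℤ ↥(LinearMap.ker (incMap G)) : ℤ) =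
      (G.edgeFinset.card : ℤ) - Fintype.card V := by
  obtain ⟨u, w, -, hw⟩ := hodd
  refine ⟨inferInstance, ?_⟩
  have hrank := LinearMap.rank_range_add_rank_ker (incMap G)
  simp only [← Module.finrank_eq_rank] at hrank
  norm_cast at hrank
  rw [finrank_range_incMap hconn.preconnected hw, Module.finrank_pi,
    ← SimpleGraph.edgeFinset_card] at hrank
  omega
end

section
/- Let G be a finite simple graph with p₀ connected components, of which p₀^bi are bipartite, and let d : ℤ^E → ℤ^V send each edge to the sum of its endpoints. Then coker(d) ≅ ℤ^{p₀^bi} ⊕ (ℤ/2)^{p₀ - p₀^bi}. -/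
namespace Stmt6Aux

open SimpleGraph Finset

variable {V : Type*} [Fintype V] [DecidableEq V] (G : SimpleGraph V) [DecidableRel G.Adj]

lemma endpointSum_mk (u w : V) :
    endpointSum (s(u, w)) = Pi.single u (1:ℤ) + Pi.single w 1 := rfl

lemma incMap_apply (f : G.edgeSet → ℤ) :
    incMap G f = ∑ e : G.edgeSet, f e • endpointSum (e : Sym2 V) := by
  simp [incMap]

lemma adj_mem {u w : V} (h : G.Adj u w) :
    Pi.single u (1:ℤ) + Pi.single w 1 ∈ LinearMap.range (incMap G) := by
  refine ⟨Pi.single (⟨s(u,w), h⟩ : G.edgeSet) 1, ?_⟩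
  rw [incMap_apply, Finset.sum_eq_single (⟨s(u,w), h⟩ : G.edgeSet)]
  · simp [endpointSum_mk]
  · intro b _ hb
    rw [Pi.single_apply, if_neg hb, zero_smul]
  · simp

lemma walk_mem {u w : V} (p : G.Walk u w) :
    Pi.single u (1:ℤ) - (-1:ℤ)^p.length • Pi.single w 1 ∈ LinearMap.range (incMap G) := by
  induction p with
  | nil => simpa using (LinearMap.range (incMap G)).zero_mem
  | @cons a b c h p ih =>
      have e : (Pi.single a (1:ℤ) : V → ℤ) - (-1:ℤ)^(SimpleGraph.Walk.cons h p).length • Pi.single c (1:ℤ)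
          = (Pi.single a (1:ℤ) + Pi.single b (1:ℤ))
            - (Pi.single b (1:ℤ) - (-1:ℤ)^p.length • Pi.single c (1:ℤ)) := by
        rw [SimpleGraph.Walk.length_cons, pow_succ]
        module
      rw [e]
      exact sub_mem (adj_mem G h) ih

noncomputable def rep (c : G.ConnectedComponent) : V := c.out

lemma mk_rep (c : G.ConnectedComponent) : G.connectedComponentMk (rep G c) = c :=
  c.out_eq

noncomputable def wlk (v : V) : G.Walk (rep G (G.connectedComponentMk v)) v :=
  (SimpleGraph.ConnectedComponent.exact (mk_rep G _)).some

noncomputable def eps (v : V) : ℤ := (-1)^(wlk G v).length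

lemma eps_eq (v : V) : eps G v = 1 ∨ eps G v = -1 := by
  unfold eps
  rcases Nat.even_or_odd (wlk G v).length with h | h
  · exact Or.inl h.neg_one_pow
  · exact Or.inr h.neg_one_pow

lemma eps_mul_self (v : V) : eps G v * eps G v = 1 := by
  rcases eps_eq G v with h | h <;> rw [h] <;> norm_num

lemma eps_cast (v : V) : ((eps G v : ℤ) : ZMod 2) = 1 := by
  rcases eps_eq G v with h | h <;> rw [h] <;> decide

lemma single_rep_mem (v : V) :
    Pi.single (rep G (G.connectedComponentMk v)) (1:ℤ) - eps G v • Pi.single v 1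
      ∈ LinearMap.range (incMap G) :=
  walk_mem G (wlk G v)


lemma walk_parity (c : G.ConnectedComponent)
    (κ : SimpleGraph.Coloring (SimpleGraph.induce c.supp G) (Fin 2)) :
    ∀ {u w : V} (p : G.Walk u w) (hu : u ∈ c.supp) (hw : w ∈ c.supp),
      (-1:ℤ)^p.length
        = (if κ ⟨u, hu⟩ = 0 then (1:ℤ) else -1) * (if κ ⟨w, hw⟩ = 0 then (1:ℤ) else -1) := by
  intro u w p
  induction p with
  | nil =>
      intro hu hw
      simp only [SimpleGraph.Walk.length_nil, pow_zero]
      split <;> norm_num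
  | @cons a b c' h p ih =>
      intro hu hw
      have hb : b ∈ c.supp := by
        rw [SimpleGraph.ConnectedComponent.mem_supp_iff] at hw ⊢
        rw [← hw]
        exact SimpleGraph.ConnectedComponent.sound p.reachable
      have hadj : (SimpleGraph.induce c.supp G).Adj ⟨a, hu⟩ ⟨b, hb⟩ := h
      have hne := κ.valid hadj
      have hsign : (if κ ⟨a, hu⟩ = 0 then (1:ℤ) else -1)
          = -(if κ ⟨b, hb⟩ = 0 then (1:ℤ) else -1) := by
        revert hne
        generalize κ ⟨a, hu⟩ = x
        generalize κ ⟨b, hb⟩ = y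
        fin_cases x <;> fin_cases y <;> simp
      rw [SimpleGraph.Walk.length_cons, pow_succ, ih hb hw, hsign]
      ring

lemma eps_adj_bip {u w : V} (h : G.Adj u w)
    (hc : (SimpleGraph.induce (G.connectedComponentMk u).supp G).Colorable 2) :
    eps G u + eps G w = 0 := by
  obtain ⟨κ⟩ := hc
  have hu : u ∈ (G.connectedComponentMk u).supp := by
    rw [SimpleGraph.ConnectedComponent.mem_supp_iff]
  have hwc : G.connectedComponentMk w = G.connectedComponentMk u :=
    SimpleGraph.ConnectedComponent.sound h.symm.reachable
  have hw : w ∈ (G.connectedComponentMk u).supp := by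
    rw [SimpleGraph.ConnectedComponent.mem_supp_iff]; exact hwc
  have hru : rep G (G.connectedComponentMk u) ∈ (G.connectedComponentMk u).supp := by
    rw [SimpleGraph.ConnectedComponent.mem_supp_iff, mk_rep]
  have hrw : rep G (G.connectedComponentMk w) ∈ (G.connectedComponentMk u).supp := by
    rw [SimpleGraph.ConnectedComponent.mem_supp_iff, mk_rep]; exact hwc
  have h1 := walk_parity G _ κ (wlk G u) hru hu
  have h2 := walk_parity G _ κ (wlk G w) hrw hw
  have h3 := walk_parity G _ κ (SimpleGraph.Walk.cons h SimpleGraph.Walk.nil) hu hw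
  have hrr : (⟨rep G (G.connectedComponentMk w), hrw⟩ :
      (G.connectedComponentMk u).supp) = ⟨rep G (G.connectedComponentMk u), hru⟩ := by
    apply Subtype.ext
    simp [hwc]
  rw [hrr] at h2
  simp only [SimpleGraph.Walk.length_cons, SimpleGraph.Walk.length_nil, zero_add, pow_one] at h3
  show (-1:ℤ)^(wlk G u).length + (-1:ℤ)^(wlk G w).length = 0
  rw [h1, h2]
  set a := (if κ ⟨rep G (G.connectedComponentMk u), hru⟩ = 0 then (1:ℤ) else -1) with ha
  set bu := (if κ ⟨u, hu⟩ = 0 then (1:ℤ) else -1) with hbu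
  set bw := (if κ ⟨w, hw⟩ = 0 then (1:ℤ) else -1) with hbw
  have h4 : bu = 1 ∨ bu = -1 := by rw [hbu]; split <;> simp
  have h5 : bw = 1 ∨ bw = -1 := by rw [hbw]; split <;> simp
  rcases h4 with h4 | h4 <;> rcases h5 with h5 | h5 <;>
    rw [h4, h5] at h3 ⊢ <;> first | ring1 | norm_num at h3

lemma nonbip_exists (c : G.ConnectedComponent)
    (hc : ¬ (SimpleGraph.induce c.supp G).Colorable 2) :
    ∃ u w, G.connectedComponentMk u = c ∧ G.Adj u w ∧ eps G u = eps G w := by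
  by_contra hcon
  push_neg at hcon
  apply hc
  refine ⟨SimpleGraph.Coloring.mk (fun v => if eps G v.1 = 1 then 0 else 1) ?_⟩
  rintro ⟨x, hx⟩ ⟨y, hy⟩ hadj hxy
  have hGxy : G.Adj x y := hadj
  have hmk : G.connectedComponentMk x = c := by
    rwa [SimpleGraph.ConnectedComponent.mem_supp_iff] at hx
  have hne : eps G x ≠ eps G y := hcon x y hmk hGxy
  rcases eps_eq G x with h1 | h1 <;> rcases eps_eq G y with h2 | h2 <;>
    simp [h1, h2] at hxy hne ⊢ <;> exact hne (h1.trans h2.symm)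

lemma two_single_mem (c : G.ConnectedComponent)
    (hc : ¬ (SimpleGraph.induce c.supp G).Colorable 2) :
    (2:ℤ) • Pi.single (rep G c) (1:ℤ) ∈ LinearMap.range (incMap G) := by
  obtain ⟨u, w, hmk, hadj, heps⟩ := nonbip_exists G c hc
  have hmkw : G.connectedComponentMk w = c := by
    rw [← hmk]
    exact SimpleGraph.ConnectedComponent.sound hadj.symm.reachable
  have A := single_rep_mem G u
  have B := single_rep_mem G w
  rw [hmk] at A
  rw [hmkw] at B
  have C := adj_mem G hadj
  have key : (2:ℤ) • (Pi.single (rep G c) (1:ℤ) : V → ℤ)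
      = ((Pi.single (rep G c) (1:ℤ) : V → ℤ) - eps G u • Pi.single u (1:ℤ))
        + ((Pi.single (rep G c) (1:ℤ) : V → ℤ) - eps G w • Pi.single w (1:ℤ))
        + eps G u • (Pi.single u (1:ℤ) + Pi.single w (1:ℤ)) := by
    rw [heps]
    module
  rw [key]
  exact add_mem (add_mem A B) (Submodule.smul_mem _ _ C)

open scoped Classical in
/-- The signed component-sum map. -/
noncomputable def Psi : (V → ℤ) →ₗ[ℤ] (G.ConnectedComponent → ℤ) where
  toFun f c := ∑ v : V, if G.connectedComponentMk v = c then eps G v * f v else 0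
  map_add' f g := by
    funext c
    simp only [Pi.add_apply]
    rw [← Finset.sum_add_distrib]
    exact Finset.sum_congr rfl fun v _ => by by_cases h : G.connectedComponentMk v = c <;>
      simp [h, mul_add]
  map_smul' z f := by
    funext c
    simp only [RingHom.id_apply, Pi.smul_apply, smul_eq_mul]
    rw [Finset.mul_sum]
    exact Finset.sum_congr rfl fun v _ => by by_cases h : G.connectedComponentMk v = c <;>
      simp [h] <;> ring

open scoped Classical in
lemma Psi_apply (f : V → ℤ) (c : G.ConnectedComponent) :
    Psi G f c = ∑ v : V, if G.connectedComponentMk v = c then eps G v * f v else 0 := rfl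

open scoped Classical in
lemma Psi_single (v : V) (a : ℤ) (c : G.ConnectedComponent) :
    Psi G (Pi.single v a) c = if G.connectedComponentMk v = c then eps G v * a else 0 := by
  rw [Psi_apply, Finset.sum_eq_single v]
  · simp
  · intro b _ hb
    rw [Pi.single_eq_of_ne hb, mul_zero, ite_self]
  · simp

/-- The assembled map to `ℤ^{bip} × (ℤ/2)^{nonbip}`. -/
noncomputable def Phi : (V → ℤ) →ₗ[ℤ]
    (({c : G.ConnectedComponent // (SimpleGraph.induce c.supp G).Colorable 2} → ℤ) ×
     ({c : G.ConnectedComponent // ¬ (SimpleGraph.induce c.supp G).Colorable 2} → ZMod 2)) :=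
  LinearMap.prod
    (LinearMap.pi fun c => (LinearMap.proj c.1).comp (Psi G))
    (LinearMap.pi fun c =>
      ((Int.castAddHom (ZMod 2)).toIntLinearMap.comp ((LinearMap.proj c.1).comp (Psi G))))

lemma Phi_fst (f : V → ℤ) (c : {c : G.ConnectedComponent //
    (SimpleGraph.induce c.supp G).Colorable 2}) : (Phi G f).1 c = Psi G f c.1 := rfl

lemma Phi_snd (f : V → ℤ) (c : {c : G.ConnectedComponent //
    ¬ (SimpleGraph.induce c.supp G).Colorable 2}) :
    (Phi G f).2 c = ((Psi G f c.1 : ℤ) : ZMod 2) := rfl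

lemma Phi_endpointSum (u w : V) (h : G.Adj u w) :
    Phi G (endpointSum s(u, w)) = 0 := by
  classical
  have hmk : G.connectedComponentMk w = G.connectedComponentMk u :=
    SimpleGraph.ConnectedComponent.sound h.symm.reachable
  have hPsi : ∀ c, Psi G (endpointSum s(u, w)) c =
      if G.connectedComponentMk u = c then eps G u + eps G w else 0 := by
    intro c
    rw [endpointSum_mk, map_add, Pi.add_apply, Psi_single, Psi_single, hmk]
    by_cases hc : G.connectedComponentMk u = c <;> simp [hc]
  refine Prod.ext ?_ ?_
  · funext cb
    rw [Phi_fst, hPsi]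
    by_cases hc : G.connectedComponentMk u = cb.1
    · rw [if_pos hc]
      apply eps_adj_bip G h
      rw [hc]
      exact cb.2
    · rw [if_neg hc]
      rfl
  · funext cn
    rw [Phi_snd, hPsi]
    by_cases hc : G.connectedComponentMk u = cn.1
    · rw [if_pos hc]
      push_cast
      rw [eps_cast, eps_cast]
      rfl
    · rw [if_neg hc]
      rfl

lemma Phi_endpointSum' (e : G.edgeSet) : Phi G (endpointSum (e : Sym2 V)) = 0 := by
  obtain ⟨e, he⟩ := e
  induction e using Sym2.ind with
  | _ u w => exact Phi_endpointSum G u w ((SimpleGraph.mem_edgeSet G).mp he)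

lemma range_le_ker : LinearMap.range (incMap G) ≤ LinearMap.ker (Phi G) := by
  rintro _ ⟨f, rfl⟩
  rw [LinearMap.mem_ker, incMap_apply, map_sum]
  refine Finset.sum_eq_zero fun e _ => ?_
  rw [map_smul, Phi_endpointSum' G e, smul_zero]

open scoped Classical in
lemma ker_le_range : LinearMap.ker (Phi G) ≤ LinearMap.range (incMap G) := by
  intro f hf
  rw [LinearMap.mem_ker] at hf
  haveI : Finite G.ConnectedComponent :=
    Finite.of_surjective (fun v => G.connectedComponentMk v)
      (fun c => c.exists_rep)
  haveI : Fintype G.ConnectedComponent := Fintype.ofFinite _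
  have h1 : ∀ v : V,
      Pi.single v (f v) - (eps G v * f v) • Pi.single (rep G (G.connectedComponentMk v)) (1:ℤ)
        ∈ LinearMap.range (incMap G) := by
    intro v
    have h2 : (f v) • (Pi.single v (1:ℤ) : V → ℤ) = Pi.single v (f v) := by
      rw [← Pi.single_smul]
      norm_num
    have h4 : (eps G v * f v) * eps G v = f v := by
      rw [mul_comm (eps G v) (f v), mul_assoc, eps_mul_self, mul_one]
    have e' : Pi.single v (f v)
          - (eps G v * f v) • (Pi.single (rep G (G.connectedComponentMk v)) (1:ℤ) : V → ℤ)
        = -((eps G v * f v) •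
            ((Pi.single (rep G (G.connectedComponentMk v)) (1:ℤ) : V → ℤ)
              - eps G v • Pi.single v (1:ℤ))) := by
      rw [smul_sub, smul_smul, h4, neg_sub, h2]
    rw [e']
    exact neg_mem (Submodule.smul_mem _ _ (single_rep_mem G v))
  have hdecomp : (∑ v : V, Pi.single v (f v)) = f := by
    funext x
    rw [Finset.sum_apply]
    simp [Pi.single_apply]
  have h5 : f - ∑ v : V, (eps G v * f v) •
        (Pi.single (rep G (G.connectedComponentMk v)) (1:ℤ) : V → ℤ)
      ∈ LinearMap.range (incMap G) := by
    have h5' : (∑ v : V, Pi.single v (f v)) - ∑ v : V, (eps G v * f v) •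
          (Pi.single (rep G (G.connectedComponentMk v)) (1:ℤ) : V → ℤ)
        ∈ LinearMap.range (incMap G) := by
      rw [← Finset.sum_sub_distrib]
      exact Submodule.sum_mem _ fun v _ => h1 v
    rwa [hdecomp] at h5'
  have h6 : (∑ v : V, (eps G v * f v) •
        (Pi.single (rep G (G.connectedComponentMk v)) (1:ℤ) : V → ℤ))
      = ∑ c : G.ConnectedComponent, (Psi G f c) • (Pi.single (rep G c) (1:ℤ) : V → ℤ) := by
    symm
    simp_rw [Psi_apply, Finset.sum_smul, ite_smul, zero_smul]
    rw [Finset.sum_comm]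
    refine Finset.sum_congr rfl fun v _ => ?_
    rw [Finset.sum_ite_eq]
    simp
  have h7 : (∑ c : G.ConnectedComponent, (Psi G f c) • (Pi.single (rep G c) (1:ℤ) : V → ℤ))
      ∈ LinearMap.range (incMap G) := by
    refine Submodule.sum_mem _ fun c _ => ?_
    by_cases hc : (SimpleGraph.induce c.supp G).Colorable 2
    · have hz : Psi G f c = 0 := by
        have h0 := congrFun (congrArg Prod.fst hf) ⟨c, hc⟩
        rw [Phi_fst] at h0
        simpa using h0
      rw [hz, zero_smul]
      exact zero_mem _
    · have h8 : ((Psi G f c : ℤ) : ZMod 2) = 0 := by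
        have h0 := congrFun (congrArg Prod.snd hf) ⟨c, hc⟩
        rw [Phi_snd] at h0
        simpa using h0
      rw [ZMod.intCast_zmod_eq_zero_iff_dvd] at h8
      obtain ⟨k, hk⟩ := h8
      rw [hk, show ((2:ℕ):ℤ) * k = k * 2 by ring, mul_smul]
      exact Submodule.smul_mem _ _ (two_single_mem G c hc)
  have := add_mem h5 (h6 ▸ h7)
  simpa using this

open scoped Classical in
lemma Phi_surj : Function.Surjective (Phi G) := by
  haveI : Finite G.ConnectedComponent :=
    Finite.of_surjective (fun v => G.connectedComponentMk v) fun c => c.exists_rep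
  haveI : Fintype G.ConnectedComponent := Fintype.ofFinite _
  rintro ⟨g, h⟩
  set m : G.ConnectedComponent → ℤ := fun c =>
    if hc : (SimpleGraph.induce c.supp G).Colorable 2 then g ⟨c, hc⟩
    else ((h ⟨c, hc⟩).val : ℤ) with hm
  refine ⟨∑ c : G.ConnectedComponent,
    (eps G (rep G c) * m c) • (Pi.single (rep G c) (1:ℤ) : V → ℤ), ?_⟩
  have hPsi : ∀ c', Psi G (∑ c : G.ConnectedComponent,
      (eps G (rep G c) * m c) • (Pi.single (rep G c) (1:ℤ) : V → ℤ)) c' = m c' := by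
    intro c'
    rw [map_sum, Finset.sum_apply, Finset.sum_eq_single c']
    · rw [map_smul, Pi.smul_apply, Psi_single, mk_rep, if_pos rfl, mul_one, smul_eq_mul,
        mul_comm (eps G (rep G c')) (m c'), mul_assoc, eps_mul_self, mul_one]
    · intro b _ hb
      rw [map_smul, Pi.smul_apply, Psi_single, mk_rep, if_neg hb, smul_zero]
    · simp
  refine Prod.ext ?_ ?_
  · funext cb
    rcases cb with ⟨c, hc⟩
    rw [Phi_fst, hPsi]
    simp only [hm]
    rw [dif_pos hc]
  · funext cn
    rcases cn with ⟨c, hc⟩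
    rw [Phi_snd, hPsi]
    simp only [hm]
    rw [dif_neg hc]
    push_cast
    simp [ZMod.natCast_val, ZMod.cast_id]

end Stmt6Aux

/-- For a finite simple graph with `p₀` connected components of which `p₀bi` are bipartite,
the cokernel of the unsigned incidence map is `ℤ^{p₀bi} ⊕ (ℤ/2)^{p₀ - p₀bi}`. -/
theorem stmt6 {V : Type*} [Fintype V] [DecidableEq V] (G : SimpleGraph V)
    [DecidableRel G.Adj] :
    Nonempty (((V → ℤ) ⧸ LinearMap.range (incMap G)) ≃+
      ((Fin (Nat.card {c : G.ConnectedComponent //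
          (SimpleGraph.induce c.supp G).Colorable 2}) → ℤ) ×
        (Fin (Nat.card G.ConnectedComponent -
          Nat.card {c : G.ConnectedComponent //
            (SimpleGraph.induce c.supp G).Colorable 2}) → ZMod 2))) := by
  classical
  haveI : Finite G.ConnectedComponent :=
    Finite.of_surjective (fun v => G.connectedComponentMk v) fun c => c.exists_rep
  have hker : LinearMap.range (incMap G) = LinearMap.ker (Stmt6Aux.Phi G) :=
    le_antisymm (Stmt6Aux.range_le_ker G) (Stmt6Aux.ker_le_range G)
  let e1 : ((V → ℤ) ⧸ LinearMap.range (incMap G)) ≃ₗ[ℤ]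
      (({c : G.ConnectedComponent // (SimpleGraph.induce c.supp G).Colorable 2} → ℤ) ×
       ({c : G.ConnectedComponent // ¬ (SimpleGraph.induce c.supp G).Colorable 2} → ZMod 2)) :=
    (Submodule.quotEquivOfEq _ _ hker).trans
      ((Stmt6Aux.Phi G).quotKerEquivOfSurjective (Stmt6Aux.Phi_surj G))
  have hcard : Nat.card {c : G.ConnectedComponent // ¬ (SimpleGraph.induce c.supp G).Colorable 2}
      = Nat.card G.ConnectedComponent
        - Nat.card {c : G.ConnectedComponent // (SimpleGraph.induce c.supp G).Colorable 2} := by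
    have h1 : Nat.card {c : G.ConnectedComponent // (SimpleGraph.induce c.supp G).Colorable 2}
        + Nat.card {c : G.ConnectedComponent // ¬ (SimpleGraph.induce c.supp G).Colorable 2}
        = Nat.card G.ConnectedComponent := by
      rw [← Nat.card_sum]
      exact Nat.card_congr (Equiv.sumCompl _)
    omega
  have e2 := Finite.equivFin {c : G.ConnectedComponent //
    (SimpleGraph.induce c.supp G).Colorable 2}
  have e3 := (Finite.equivFin {c : G.ConnectedComponent //
    ¬ (SimpleGraph.induce c.supp G).Colorable 2}).trans (finCongr hcard)
  exact ⟨e1.toAddEquiv.trans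
    (AddEquiv.prodCongr (AddEquiv.arrowCongr e2 (AddEquiv.refl ℤ))
      (AddEquiv.arrowCongr e3 (AddEquiv.refl (ZMod 2))))⟩
end
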